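/- arXiv:2410.21679 — 3 statements merged into one kernel-verified Lean document; each statement's English description precedes it below -/
import Mathlib

section
/- Let F: ℂ^{N+1} → ℂ^{N+1} be a homogeneous polynomial map of degree d ≥ 2 with nonzero resultant (i.e., F⁻¹(0) = {0}) and suppose there is a constant B such that |log‖F(y)‖ − d·log‖y‖| ≤ B for all y ≠ 0, where ‖·‖ is the sup norm. Define G_m(x) = d^{−m} log‖F^m(x)‖. Then the limit G(x) = lim_{m→∞} G_m(x) exists for every x ≠ 0 and satisfies |G_m(x) − G(x)| ≤ B/((d−1)·d^{m−1}) for all m ≥ 0; in particular |G_m(x) − G(x)| ≤ (B/d^m)·(d/(d−1)). -/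
/-!
Writing `a m = log ‖F^m x‖`, the hypothesis says `|a (m + 1) - d * a m| ≤ B`, so consecutive
terms of `a m / d ^ m` differ by at most `B / d ^ (m + 1)`. The sequence is therefore Cauchy with
geometrically decaying increments, and summing the tail of the geometric series bounds its
distance to the limit by `B / ((d - 1) * d ^ m)`.
-/

open Filter Topology

theorem dist_div_pow_succ_le {a : ℕ → ℝ} {d B : ℝ} (hd : 0 < d)
    (ha : ∀ n, |a (n + 1) - d * a n| ≤ B) (n : ℕ) :
    dist (a n / d ^ n) (a (n + 1) / d ^ (n + 1)) ≤ B / d * (1 / d) ^ n := by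
  have hdn : (0 : ℝ) < d ^ (n + 1) := pow_pos hd _
  have hdiff : a n / d ^ n - a (n + 1) / d ^ (n + 1) = -(a (n + 1) - d * a n) / d ^ (n + 1) := by
    field_simp
    ring
  rw [Real.dist_eq, hdiff, abs_div, abs_neg, abs_of_pos hdn,
    show B / d * (1 / d) ^ n = B / d ^ (n + 1) by rw [one_div_pow, pow_succ]; field_simp]
  gcongr
  exact ha n

theorem exists_tendsto_div_pow_of_abs_sub_mul_le {a : ℕ → ℝ} {d B : ℝ} (hd : 1 < d)
    (ha : ∀ n, |a (n + 1) - d * a n| ≤ B) :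
    ∃ G, Tendsto (fun n => a n / d ^ n) atTop (𝓝 G) ∧
      ∀ n, |a n / d ^ n - G| ≤ B / ((d - 1) * d ^ n) := by
  have hd0 : 0 < d := one_pos.trans hd
  have hratio : 1 / d < 1 := (div_lt_one hd0).2 hd
  have hstep := dist_div_pow_succ_le hd0 ha
  obtain ⟨G, hG⟩ := cauchySeq_tendsto_of_complete (cauchySeq_of_le_geometric _ _ hratio hstep)
  refine ⟨G, hG, fun n => ?_⟩
  have htail := dist_le_of_le_geometric_of_tendsto _ _ hratio hstep hG n
  have hsum : B / d * (1 / d) ^ n / (1 - 1 / d) = B / ((d - 1) * d ^ n) := by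
    have : d - 1 ≠ 0 := (sub_pos.2 hd).ne'
    rw [one_div_pow]
    field_simp
  rwa [Real.dist_eq, hsum] at htail

theorem stmt_7_general (N : ℕ) (d : ℕ) (hd : 2 ≤ d)
    (F : (Fin (N + 1) → ℂ) → (Fin (N + 1) → ℂ)) (B : ℝ)
    (hzero : ∀ y, F y = 0 → y = 0)
    (hB : ∀ y, y ≠ 0 → |Real.log ‖F y‖ - (d : ℝ) * Real.log ‖y‖| ≤ B) :
    ∀ x, x ≠ 0 → ∃ G : ℝ,
      Tendsto (fun m : ℕ => Real.log ‖F^[m] x‖ / (d : ℝ) ^ m) atTop (nhds G) ∧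
      ∀ m : ℕ,
        |Real.log ‖F^[m] x‖ / (d : ℝ) ^ m - G| ≤ B / (((d : ℝ) - 1) * (d : ℝ) ^ (m - 1)) ∧
        |Real.log ‖F^[m] x‖ / (d : ℝ) ^ m - G| ≤ (B / (d : ℝ) ^ m) * ((d : ℝ) / ((d : ℝ) - 1)) := by
  intro x hx
  have hd1 : (1 : ℝ) < d := by exact_mod_cast hd
  have hB0 : 0 ≤ B := (abs_nonneg _).trans (hB x hx)
  have hmaps : Set.MapsTo F {y | y ≠ 0} {y | y ≠ 0} := fun y hy hFy => hy (hzero y hFy)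
  obtain ⟨G, hG, hbound⟩ := exists_tendsto_div_pow_of_abs_sub_mul_le hd1
    (a := fun m => Real.log ‖F^[m] x‖) fun m => by
      simpa only [Function.iterate_succ_apply'] using hB _ (hmaps.iterate m hx)
  refine ⟨G, hG, fun m => ⟨(hbound m).trans ?_, (hbound m).trans ?_⟩⟩
  · have : (d : ℝ) ^ (m - 1) ≤ (d : ℝ) ^ m := pow_le_pow_right₀ hd1.le (Nat.sub_le m 1)
    have : 0 < (d : ℝ) - 1 := sub_pos.2 hd1
    gcongr
  · have : 0 < (d : ℝ) - 1 := sub_pos.2 hd1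
    rw [show B / (d : ℝ) ^ m * (d / (d - 1)) = d * (B / ((d - 1) * (d : ℝ) ^ m)) by
      field_simp]
    exact le_mul_of_one_le_left (by positivity) hd1.le

/-- Tate's telescoping argument: if `F` is homogeneous of degree `d ≥ 2`, vanishes only at the
origin, and `|log‖F y‖ − d·log‖y‖| ≤ B` for `y ≠ 0`, then `G_m(x) = d^{−m} log‖F^m x‖`
converges to a limit `G(x)` with `|G_m(x) − G(x)| ≤ B/((d−1)·d^{m−1}) ≤ (B/d^m)·(d/(d−1))`. -/
theorem stmt_7 (N : ℕ) (d : ℕ) (hd : 2 ≤ d)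
    (F : (Fin (N + 1) → ℂ) → (Fin (N + 1) → ℂ)) (B : ℝ)
    (hzero : ∀ y, F y = 0 → y = 0)
    (hhom : ∀ (c : ℂ) (y), F (c • y) = c ^ d • F y)
    (hB : ∀ y, y ≠ 0 → |Real.log ‖F y‖ - (d : ℝ) * Real.log ‖y‖| ≤ B) :
    ∀ x, x ≠ 0 → ∃ G : ℝ,
      Tendsto (fun m : ℕ => Real.log ‖F^[m] x‖ / (d : ℝ) ^ m) atTop (nhds G) ∧
      ∀ m : ℕ,
        |Real.log ‖F^[m] x‖ / (d : ℝ) ^ m - G| ≤ B / (((d : ℝ) - 1) * (d : ℝ) ^ (m - 1)) ∧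
        |Real.log ‖F^[m] x‖ / (d : ℝ) ^ m - G| ≤ (B / (d : ℝ) ^ m) * ((d : ℝ) / ((d : ℝ) - 1)) :=
  stmt_7_general N d hd F B hzero hB
end

section
/- Let A be an n×n positive definite Hermitian matrix over ℂ. Then there exists a matrix Q with QAQ* = I whose entries are bounded in absolute value by C(n)·λ_min(A)^{−1/2}, where λ_min(A) is the smallest eigenvalue of A, and such that the image Q*(unit polydisc) contains a polydisc of radius c(n)·(tr A)^{−1/2}, for dimensional constants C(n), c(n). -/
/-!
Diagonalize `A = U D U*` with `U` unitary and take `Q = D^{-1/2} U*`. Entries of a unitary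
matrix have norm at most `1`, so `‖Q i j‖ ≤ λᵢ^{-1/2} ≤ lam^{-1/2}`. The right inverse
`D^{1/2} U*` of `Q*` has entries of norm at most `λ_max^{1/2} ≤ (tr A)^{1/2}`, so it maps the
polydisc of radius `(n + 1)⁻¹ (tr A)^{-1/2}` into the unit polydisc, and `C = 1`,
`c = 1 / (n + 1)` work.
-/

open scoped ComplexOrder Matrix

namespace Matrix

lemma norm_mulVec_apply_le {α l m : Type*} [SeminormedRing α] [Fintype m] {M : Matrix l m α}
    {B : ℝ} (hM : ∀ i j, ‖M i j‖ ≤ B) (w : m → α) (i : l) :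
    ‖(M *ᵥ w) i‖ ≤ B * ∑ j, ‖w j‖ := by
  rw [Finset.mul_sum]
  refine (norm_sum_le _ _).trans (Finset.sum_le_sum fun j _ => ?_)
  exact (norm_mul_le _ _).trans (mul_le_mul_of_nonneg_right (hM i j) (norm_nonneg _))

variable {𝕜 n : Type*} [RCLike 𝕜] [Fintype n] [DecidableEq n]

lemma IsHermitian.le_eigenvalues_of_posSemidef_sub_smul_one {A : Matrix n n 𝕜}
    (hA : A.IsHermitian) {r : ℝ} (h : (A - (r : 𝕜) • 1).PosSemidef) (i : n) :
    r ≤ hA.eigenvalues i := by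
  set v : n → 𝕜 := ⇑(hA.eigenvectorBasis i)
  have hv : star v ⬝ᵥ v = 1 := by
    rw [dotProduct_comm, ← EuclideanSpace.inner_eq_star_dotProduct, inner_self_eq_norm_sq_to_K,
      hA.eigenvectorBasis.orthonormal.1 i]
    simp
  have hquad := RCLike.nonneg_iff.1 (h.dotProduct_mulVec_nonneg v)
  rw [sub_mulVec, smul_mulVec, one_mulVec, dotProduct_sub, dotProduct_smul, hv] at hquad
  simpa [hA.eigenvalues_eq i] using hquad.1

lemma PosSemidef.eigenvalues_le_re_trace {A : Matrix n n 𝕜} (hA : A.PosSemidef) (i : n) :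
    hA.1.eigenvalues i ≤ RCLike.re A.trace := by
  rw [hA.1.trace_eq_sum_eigenvalues, map_sum]
  simp only [RCLike.ofReal_re]
  exact Finset.single_le_sum (fun j _ => hA.eigenvalues_nonneg j) (Finset.mem_univ i)

lemma norm_diagonal_mul_conjTranspose_apply_le {U : Matrix n n 𝕜}
    (hU : U ∈ unitaryGroup n 𝕜) (d : n → 𝕜) (i j : n) :
    ‖(diagonal d * Uᴴ) i j‖ ≤ ‖d i‖ := by
  rw [diagonal_mul, norm_mul, conjTranspose_apply, norm_star]
  exact mul_le_of_le_one_right (norm_nonneg _) (entry_norm_bound_of_unitary hU j i)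

lemma polydisc_subset_image_mulVec {α : Type*} [SeminormedRing α] {M P : Matrix n n α}
    (hMP : M * P = 1) {B : ℝ} (hP : ∀ i j, ‖P i j‖ ≤ B) :
    {v : n → α | ∀ i, ‖v i‖ < 1 / (Fintype.card n + 1) * B⁻¹} ⊆
      (fun v => M *ᵥ v) '' {v : n → α | ∀ i, ‖v i‖ < 1} := by
  intro w hw
  refine ⟨P *ᵥ w, fun i => ?_, by simp [mulVec_mulVec, hMP]⟩
  have hB : 0 ≤ B := (norm_nonneg _).trans (hP i i)
  calc ‖(P *ᵥ w) i‖ ≤ B * ∑ j, ‖w j‖ := norm_mulVec_apply_le hP w i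
    _ ≤ B * (Fintype.card n * (1 / (Fintype.card n + 1) * B⁻¹)) := by
      gcongr
      exact (Finset.sum_le_sum fun j _ => (hw j).le).trans_eq (by simp)
    _ = Fintype.card n / (Fintype.card n + 1) * (B * B⁻¹) := by ring
    _ ≤ Fintype.card n / (Fintype.card n + 1) :=
      mul_le_of_le_one_right (by positivity) mul_inv_le_one
    _ < 1 := by rw [div_lt_one (by positivity)]; linarith

namespace PosDef

variable {A : Matrix n n 𝕜} (hA : A.PosDef)

noncomputable def normalCoordinates : Matrix n n 𝕜 :=
  diagonal (fun i ↦ ((√(hA.1.eigenvalues i) : ℝ) : 𝕜)⁻¹) *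
    (hA.1.eigenvectorUnitary : Matrix n n 𝕜)ᴴ

lemma conjTranspose_normalCoordinates :
    hA.normalCoordinatesᴴ = (hA.1.eigenvectorUnitary : Matrix n n 𝕜) *
      diagonal (fun i ↦ ((√(hA.1.eigenvalues i) : ℝ) : 𝕜)⁻¹) := by
  rw [normalCoordinates, conjTranspose_mul, conjTranspose_conjTranspose, diagonal_conjTranspose]
  congr 2
  funext i
  simp [RCLike.star_def, RCLike.conj_ofReal]

lemma ofReal_sqrt_eigenvalues_ne_zero (i : n) : ((√(hA.1.eigenvalues i) : ℝ) : 𝕜) ≠ 0 :=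
  RCLike.ofReal_ne_zero.2 (Real.sqrt_pos.2 (hA.eigenvalues_pos i)).ne'

lemma normalCoordinates_mul_mul_conjTranspose :
    hA.normalCoordinates * A * hA.normalCoordinatesᴴ = 1 := by
  have hdiag := hA.1.conjStarAlgAut_star_eigenvectorUnitary
  rw [Unitary.conjStarAlgAut_star_apply, star_eq_conjTranspose] at hdiag
  rw [conjTranspose_normalCoordinates, normalCoordinates]
  calc _ = diagonal (fun i ↦ ((√(hA.1.eigenvalues i) : ℝ) : 𝕜)⁻¹) *
        ((hA.1.eigenvectorUnitary : Matrix n n 𝕜)ᴴ * A * hA.1.eigenvectorUnitary) *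
          diagonal (fun i ↦ ((√(hA.1.eigenvalues i) : ℝ) : 𝕜)⁻¹) := by
        simp only [Matrix.mul_assoc]
    _ = 1 := by
      rw [hdiag, diagonal_mul_diagonal, diagonal_mul_diagonal, ← diagonal_one]
      congr 1
      funext i
      have hμ : ((hA.1.eigenvalues i : ℝ) : 𝕜) =
          ((√(hA.1.eigenvalues i) : ℝ) : 𝕜) * ((√(hA.1.eigenvalues i) : ℝ) : 𝕜) := by
        rw [← RCLike.ofReal_mul, Real.mul_self_sqrt (hA.eigenvalues_pos i).le]
      have hs := hA.ofReal_sqrt_eigenvalues_ne_zero i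
      simp only [Function.comp_apply, hμ]
      field_simp

lemma norm_normalCoordinates_apply_le (i j : n) :
    ‖hA.normalCoordinates i j‖ ≤ (√(hA.1.eigenvalues i))⁻¹ := by
  refine (norm_diagonal_mul_conjTranspose_apply_le hA.1.eigenvectorUnitary.2 _ i j).trans_eq ?_
  simp [(Real.sqrt_pos.2 (hA.eigenvalues_pos i)).le]

lemma exists_conjTranspose_normalCoordinates_mul_eq_one :
    ∃ P : Matrix n n 𝕜, hA.normalCoordinatesᴴ * P = 1 ∧
      ∀ i j, ‖P i j‖ ≤ √(hA.1.eigenvalues i) := by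
  refine ⟨diagonal (fun i ↦ ((√(hA.1.eigenvalues i) : ℝ) : 𝕜)) *
    (hA.1.eigenvectorUnitary : Matrix n n 𝕜)ᴴ, ?_, fun i j => ?_⟩
  · rw [conjTranspose_normalCoordinates, Matrix.mul_assoc, ← Matrix.mul_assoc (diagonal _),
      diagonal_mul_diagonal]
    simp only [inv_mul_cancel₀ (hA.ofReal_sqrt_eigenvalues_ne_zero _), diagonal_one,
      Matrix.one_mul]
    exact mem_unitaryGroup_iff.1 hA.1.eigenvectorUnitary.2
  · exact (norm_diagonal_mul_conjTranspose_apply_le hA.1.eigenvectorUnitary.2 _ i j).trans_eq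
      (by simp)

end PosDef

end Matrix

/-- Normal coordinates lemma: for a positive definite Hermitian `A` with smallest eigenvalue
`≥ lam`, there is `Q` with `Q A Q* = I`, entries bounded by `C(n)·lam^{−1/2}`, and such that
`Q*` maps the unit polydisc onto a set containing a polydisc of radius `c(n)·(tr A)^{−1/2}`. -/
theorem stmt_15 (n : ℕ) :
    ∃ C c : ℝ, 0 < C ∧ 0 < c ∧
      ∀ (A : Matrix (Fin n) (Fin n) ℂ), A.PosDef →
        ∀ lam : ℝ, 0 < lam →
          (A - (lam : ℂ) • (1 : Matrix (Fin n) (Fin n) ℂ)).PosSemidef →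
          ∃ Q : Matrix (Fin n) (Fin n) ℂ,
            Q * A * Qᴴ = 1 ∧
            (∀ i j, ‖Q i j‖ ≤ C * (Real.sqrt lam)⁻¹) ∧
            {v : Fin n → ℂ | ∀ i, ‖v i‖ < c * (Real.sqrt A.trace.re)⁻¹} ⊆
              (fun v => Qᴴ.mulVec v) '' {v : Fin n → ℂ | ∀ i, ‖v i‖ < 1} := by
  refine ⟨1, 1 / (n + 1), one_pos, by positivity, fun A hA lam hlam hsub => ?_⟩
  obtain ⟨P, hQP, hP⟩ := hA.exists_conjTranspose_normalCoordinates_mul_eq_one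
  refine ⟨hA.normalCoordinates, hA.normalCoordinates_mul_mul_conjTranspose, fun i j => ?_, ?_⟩
  · have hlam_le : lam ≤ hA.1.eigenvalues i :=
      hA.1.le_eigenvalues_of_posSemidef_sub_smul_one hsub i
    rw [one_mul]
    exact (hA.norm_normalCoordinates_apply_le i j).trans
      (inv_anti₀ (Real.sqrt_pos.2 hlam) (Real.sqrt_le_sqrt hlam_le))
  · have hP_trace : ∀ i j, ‖P i j‖ ≤ √A.trace.re := fun i j =>
      (hP i j).trans (Real.sqrt_le_sqrt (hA.posSemidef.eigenvalues_le_re_trace i))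
    simpa using Matrix.polydisc_subset_image_mulVec hQP hP_trace
end

section
/- Let d ≥ 2, and suppose: (a) every point of Per_n (periodic points of exact period dividing n) of degree < c^n over K lies on a curve of degree at most C·c^{en}; (b) any curve of degree e contains at most 3e²dⁿ points of Per_n; (c) |Per_n| ≥ α·d^{2n}. If c > 1 is chosen with C²c^{2en} < (d/c')ⁿ for some c' > 1, then the proportion of points x ∈ Per_n with [K(x):K] < cⁿ is at most O(c'^{−n}); equivalently, a (1 − O(c'^{−n}))-fraction of x ∈ Per_n satisfy [K(x):K] ≥ cⁿ, and [K(Per_n):K] ≥ cⁿ for n large. -/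
/-- Final deduction for Galois lower bounds on periodic points: assume (a) every point of `Per_n`
of degree `< cⁿ` lies on the curve `Cv` of degree `degC ≤ Cc·c^{en}`, (b) `Cv` contains at most
`3·degC²·dⁿ` points of `Per_n`, (c) `|Per_n| ≥ α·d^{2n}`, and `Cc²·c^{2en} < (d/c')ⁿ` with
`c, c' > 1`. Then the proportion of `x ∈ Per_n` with degree `< cⁿ` is at most `(3/α)·c'^{−n}`. -/
theorem stmt_19 {X : Type*} (Pn : Finset X) (deg : X → ℝ) (Cv : Set X) (degC : ℕ)
    (Cc c c' α : ℝ) (e n d : ℕ) (hd : 2 ≤ d)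
    (hc1 : 1 < c) (hc'1 : 1 < c') (hα : 0 < α) (hCc : 0 < Cc)
    (ha1 : ∀ x ∈ Pn, deg x < c ^ n → x ∈ Cv)
    (ha2 : (degC : ℝ) ≤ Cc * c ^ (e * n))
    (hb : (Nat.card {x : X | x ∈ Pn ∧ x ∈ Cv} : ℝ) ≤ 3 * (degC : ℝ) ^ 2 * (d : ℝ) ^ n)
    (hcount : α * (d : ℝ) ^ (2 * n) ≤ (Pn.card : ℝ))
    (hconst : Cc ^ 2 * c ^ (2 * e * n) < ((d : ℝ) / c') ^ n) :
    (Nat.card {x : X | x ∈ Pn ∧ deg x < c ^ n} : ℝ) ≤ (3 / α) * c'⁻¹ ^ n * (Pn.card : ℝ) := by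
  have hc'0 : (0:ℝ) < c' := lt_trans one_pos hc'1
  have hc'n : (0:ℝ) < c' ^ n := pow_pos hc'0 n
  have hd0 : (0:ℝ) < (d:ℝ) := by positivity
  have hdn : (0:ℝ) < (d:ℝ) ^ n := pow_pos hd0 n
  have hTfin : {x : X | x ∈ Pn ∧ x ∈ Cv}.Finite :=
    Pn.finite_toSet.subset (fun x hx => hx.1)
  have hsub : {x : X | x ∈ Pn ∧ deg x < c ^ n} ⊆ {x : X | x ∈ Pn ∧ x ∈ Cv} :=
    fun x hx => ⟨hx.1, ha1 x hx.1 hx.2⟩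
  have h1 : (Nat.card {x : X | x ∈ Pn ∧ deg x < c ^ n} : ℝ)
      ≤ (Nat.card {x : X | x ∈ Pn ∧ x ∈ Cv} : ℝ) := by
    exact_mod_cast Nat.card_mono hTfin hsub
  have hdegC0 : (0:ℝ) ≤ (degC:ℝ) := Nat.cast_nonneg _
  have hsq : (degC:ℝ) ^ 2 ≤ Cc ^ 2 * c ^ (2 * e * n) := by
    have := mul_self_le_mul_self hdegC0 ha2
    calc (degC:ℝ) ^ 2 = (degC:ℝ) * (degC:ℝ) := sq (degC:ℝ)
      _ ≤ (Cc * c ^ (e * n)) * (Cc * c ^ (e * n)) := this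
      _ = Cc ^ 2 * c ^ (2 * e * n) := by
          rw [show 2 * e * n = (e * n) + (e * n) by ring, pow_add]; ring
  have h2 : 3 * (degC : ℝ) ^ 2 * (d : ℝ) ^ n < 3 * ((d:ℝ)/c') ^ n * (d:ℝ) ^ n := by
    have := lt_of_le_of_lt hsq hconst
    nlinarith [hdn, this]
  have h3 : 3 * ((d:ℝ)/c') ^ n * (d:ℝ) ^ n = 3 * (d:ℝ) ^ (2*n) * c'⁻¹ ^ n := by
    rw [div_pow, two_mul, pow_add, inv_pow]
    field_simp
  have hfin : 3 * (d:ℝ) ^ (2*n) * c'⁻¹ ^ n ≤ (3 / α) * c'⁻¹ ^ n * (Pn.card : ℝ) := by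
    have hinv : (0:ℝ) < c'⁻¹ ^ n := by positivity
    have h4 : 3 * (d:ℝ) ^ (2*n) = (3/α) * (α * (d:ℝ)^(2*n)) := by
      field_simp
    rw [h4]
    have : (3/α) * (α * (d:ℝ)^(2*n)) * c'⁻¹ ^ n ≤ (3/α) * (Pn.card : ℝ) * c'⁻¹ ^ n := by
      apply mul_le_mul_of_nonneg_right _ hinv.le
      exact mul_le_mul_of_nonneg_left hcount (by positivity)
    linarith [this]
  linarith [h1, lt_of_le_of_lt hb h2, h3 ▸ (le_of_lt h2)]
end
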